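/- arXiv:1904.10515 — 4 statements merged into one kernel-verified Lean document; each statement's English description precedes it below -/
import Mathlib

section
/- Let Φ(t) = e^{|t|} − |t| − 1 and Ψ(t) = (1+|t|)·log(1+|t|) − |t|. If f ∈ L^Ψ and x is an L^Ψ-point of f, then Σ_{k=0}^{n} ( Ψ′(1/(k+1)) / (k+1)^{1/2} ) · Ψ( w_x f(π(k+1)/(n+1))_Ψ ) + (n+1) Ψ(1/(n+1)) Ψ( w_x f(π)_Ψ ) → 0 as n → ∞. -/
/-!
Since `Ψ` is continuous, vanishes at `0` and `Ψ ∘ Ψinv = id` on `[0, ∞)`, the `L^Ψ`-point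
condition says that the means `(1/δ) ∫₀^δ Ψ(|φ_x|)` tend to `0` as `δ → 0⁺`; by integrability
they are also bounded on `(0, π]`. The weights `log(1 + 1/(k+1)) / √(k+1) ≤ (k+1)^(-3/2)`
are summable and each node `π(k+1)/(n+1)` tends to `0`, so the sum tends to `0` by Tannery's
theorem.
The last term is at most `Ψ(w_x f(π)_Ψ) / (n+1)` because `Ψ(t) ≤ t²`.
-/

open Real MeasureTheory Filter Set Topology

/-- `φ_x(t) = f(x+t) + f(x−t) − 2f(x)`. -/
noncomputable def phi (f : ℝ → ℝ) (x t : ℝ) : ℝ := f (x + t) + f (x - t) - 2 * f x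

theorem tendsto_sum_range_mul_of_summable {c : ℕ → ℝ} {a : ℕ → ℕ → ℝ} {M : ℝ}
    (hc : Summable c) (hc0 : ∀ k, 0 ≤ c k) (ha : ∀ n k, k ≤ n → |a n k| ≤ M)
    (hlim : ∀ k, Tendsto (fun n => a n k) atTop (𝓝 0)) :
    Tendsto (fun n => ∑ k ∈ Finset.range (n + 1), c k * a n k) atTop (𝓝 0) := by
  have hM : 0 ≤ M := (abs_nonneg _).trans (ha 0 0 le_rfl)
  simp only [fun n => sum_eq_tsum_indicator (fun k => c k * a n k) (Finset.range (n + 1))]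
  rw [← tsum_zero]
  refine tendsto_tsum_of_dominated_convergence (bound := fun k => c k * M) (hc.mul_right M)
    (fun k => ?_) (.of_forall fun n k => ?_)
  · have hk : Tendsto (fun n => c k * a n k) atTop (𝓝 0) := by
      simpa using (hlim k).const_mul (c k)
    refine hk.congr' ?_
    filter_upwards [eventually_ge_atTop k] with n hn
    simp [Nat.lt_succ_iff.2 hn]
  · by_cases hk : k ≤ n
    · simpa [Nat.lt_succ_iff.2 hk, abs_mul, abs_of_nonneg (hc0 k)] using
        mul_le_mul_of_nonneg_left (ha n k hk) (hc0 k)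
    · simpa [Nat.lt_succ_iff, hk] using mul_nonneg (hc0 k) hM

theorem tendsto_div_nat_add_one_nhdsGT_zero {a : ℝ} (ha : 0 < a) :
    Tendsto (fun n : ℕ => a / ((n : ℝ) + 1)) atTop (𝓝[>] 0) :=
  tendsto_nhdsWithin_of_tendsto_nhds_of_eventually_within _
    (by simpa [div_eq_mul_inv] using tendsto_one_div_add_atTop_nhds_zero_nat.const_mul a)
    (.of_forall fun n => div_pos ha (by positivity))

noncomputable def orliczPsi (t : ℝ) : ℝ := (1 + |t|) * log (1 + |t|) - |t|

@[simp] theorem orliczPsi_zero : orliczPsi 0 = 0 := by simp [orliczPsi]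

theorem continuous_orliczPsi : Continuous orliczPsi := by
  have h : Continuous fun t : ℝ => 1 + |t| := by fun_prop
  exact (h.mul (h.log fun t => by positivity)).sub continuous_abs

theorem orliczPsi_nonneg (t : ℝ) : 0 ≤ orliczPsi t := by
  have hpos : 0 < 1 + |t| := by positivity
  have hlog : log (1 + |t|)⁻¹ ≤ (1 + |t|)⁻¹ - 1 := log_le_sub_one_of_pos (inv_pos.2 hpos)
  rw [log_inv] at hlog
  have := mul_inv_cancel₀ hpos.ne'
  unfold orliczPsi
  nlinarith

theorem orliczPsi_le_sq (t : ℝ) : orliczPsi t ≤ t ^ 2 := by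
  have hlog : log (1 + |t|) ≤ |t| := by
    linarith [log_le_sub_one_of_pos (by positivity : 0 < 1 + |t|)]
  have := abs_nonneg t
  rw [orliczPsi, ← sq_abs t]
  nlinarith

theorem tendsto_nat_add_one_mul_orliczPsi_inv :
    Tendsto (fun n : ℕ => ((n : ℝ) + 1) * orliczPsi (1 / ((n : ℝ) + 1))) atTop (𝓝 0) := by
  refine squeeze_zero (fun n => mul_nonneg (by positivity) (orliczPsi_nonneg _)) (fun n => ?_)
    tendsto_one_div_add_atTop_nhds_zero_nat
  calc ((n : ℝ) + 1) * orliczPsi (1 / ((n : ℝ) + 1))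
      ≤ ((n : ℝ) + 1) * (1 / ((n : ℝ) + 1)) ^ 2 :=
        mul_le_mul_of_nonneg_left (orliczPsi_le_sq _) (by positivity)
    _ = 1 / ((n : ℝ) + 1) := by field_simp

theorem summable_log_one_add_inv_div_sqrt :
    Summable fun k : ℕ => log (1 + 1 / ((k : ℝ) + 1)) / √((k : ℝ) + 1) := by
  have hdom : Summable fun k : ℕ => 1 / ((k : ℝ) + 1) ^ (3 / 2 : ℝ) := by
    simpa using (summable_nat_add_iff 1).2
      (summable_one_div_nat_rpow.2 (by norm_num : (1 : ℝ) < 3 / 2))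
  refine hdom.of_nonneg_of_le (fun k => div_nonneg
    (log_nonneg (le_add_of_nonneg_right (by positivity))) (sqrt_nonneg _)) fun k => ?_
  have hk : (0 : ℝ) < k + 1 := by positivity
  have hlog : log (1 + 1 / ((k : ℝ) + 1)) ≤ 1 / ((k : ℝ) + 1) := by
    linarith [log_le_sub_one_of_pos (by positivity : (0 : ℝ) < 1 + 1 / ((k : ℝ) + 1))]
  calc log (1 + 1 / ((k : ℝ) + 1)) / √((k : ℝ) + 1)
      ≤ 1 / ((k : ℝ) + 1) / √((k : ℝ) + 1) := by gcongr
    _ = 1 / ((k : ℝ) + 1) ^ (3 / 2 : ℝ) := by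
      rw [show (3 / 2 : ℝ) = 1 + 1 / 2 by norm_num, rpow_add hk, rpow_one, ← sqrt_eq_rpow, div_div]

theorem exists_average_le_of_eventually {g : ℝ → ℝ} {b C : ℝ} (hg : ∀ t, 0 ≤ g t)
    (hint : IntervalIntegrable g volume 0 b)
    (hC : ∀ᶠ δ in 𝓝[>] 0, (1 / δ) * ∫ t in (0 : ℝ)..δ, g t ≤ C) :
    ∃ M, ∀ δ ∈ Ioc 0 b, (1 / δ) * ∫ t in (0 : ℝ)..δ, g t ≤ M := by
  obtain ⟨η, hη, hsub⟩ := mem_nhdsGT_iff_exists_Ioo_subset.1 hC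
  refine ⟨max C ((1 / η) * ∫ t in (0 : ℝ)..b, g t), fun δ ⟨hδ, hδb⟩ => ?_⟩
  rcases lt_or_ge δ η with hδη | hηδ
  · exact (hsub ⟨hδ, hδη⟩).trans (le_max_left _ _)
  · refine le_max_of_le_right ?_
    calc (1 / δ) * ∫ t in (0 : ℝ)..δ, g t
        ≤ (1 / η) * ∫ t in (0 : ℝ)..δ, g t :=
          mul_le_mul_of_nonneg_right (one_div_le_one_div_of_le hη hηδ)
            (intervalIntegral.integral_nonneg hδ.le fun t _ => hg t)
      _ ≤ (1 / η) * ∫ t in (0 : ℝ)..b, g t :=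
          mul_le_mul_of_nonneg_left (intervalIntegral.integral_mono_interval le_rfl hδ.le hδb
            (ae_of_all _ hg) hint) (one_div_pos.2 hη).le

theorem statement2_general
    (Ψ Ψinv : ℝ → ℝ)
    (hΨdef : ∀ t, Ψ t = (1 + |t|) * Real.log (1 + |t|) - |t|)
    -- Ψinv is the inverse of Ψ on [0, ∞)
    (hΨinv₂ : ∀ v ≥ (0 : ℝ), Ψ (Ψinv v) = v)
    (f : ℝ → ℝ)
    -- x is an L^Ψ-point of f
    (x : ℝ)
    (hφΨint : IntervalIntegrable (fun t => Ψ |phi f x t|) volume 0 π)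
    (hLΨpoint : Filter.Tendsto
      (fun δ => Ψinv ((1 / δ) * ∫ t in (0 : ℝ)..δ, Ψ |phi f x t|))
      (nhdsWithin 0 (Set.Ioi 0)) (nhds 0)) :
    Filter.Tendsto
      (fun n : ℕ =>
        (∑ k ∈ Finset.range (n + 1),
          (Real.log (1 + 1 / ((k : ℝ) + 1)) / Real.sqrt ((k : ℝ) + 1)) *
            Ψ (Ψinv ((1 / (π * ((k : ℝ) + 1) / ((n : ℝ) + 1))) *
              ∫ t in (0 : ℝ)..(π * ((k : ℝ) + 1) / ((n : ℝ) + 1)), Ψ |phi f x t|)))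
        + ((n : ℝ) + 1) * Ψ (1 / ((n : ℝ) + 1)) *
            Ψ (Ψinv ((1 / π) * ∫ t in (0 : ℝ)..π, Ψ |phi f x t|)))
      Filter.atTop (nhds 0) := by
  obtain rfl : Ψ = orliczPsi := funext hΨdef
  set avg : ℝ → ℝ := fun δ => (1 / δ) * ∫ t in (0 : ℝ)..δ, orliczPsi |phi f x t|
  have havg_nonneg (δ : ℝ) (hδ : 0 < δ) : 0 ≤ avg δ :=
    mul_nonneg (by positivity)
      (intervalIntegral.integral_nonneg hδ.le fun t _ => orliczPsi_nonneg _)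
  have hΨΨinv (δ : ℝ) (hδ : 0 < δ) : orliczPsi (Ψinv (avg δ)) = avg δ :=
    hΨinv₂ _ (havg_nonneg δ hδ)
  have havg : Tendsto avg (𝓝[>] 0) (𝓝 0) := by
    have h := (continuous_orliczPsi.tendsto 0).comp hLΨpoint
    rw [orliczPsi_zero] at h
    exact h.congr' (eventually_nhdsWithin_of_forall hΨΨinv)
  obtain ⟨M, hM⟩ := exists_average_le_of_eventually (fun t => orliczPsi_nonneg _) hφΨint
    (havg.eventually (ge_mem_nhds one_pos))
  have hnode_pos (n k : ℕ) : 0 < π * ((k : ℝ) + 1) / ((n : ℝ) + 1) := by positivity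
  have hnode_le (n k : ℕ) (hk : k ≤ n) : π * ((k : ℝ) + 1) / ((n : ℝ) + 1) ≤ π := by
    rw [mul_div_assoc]
    exact mul_le_of_le_one_right pi_pos.le ((div_le_one (by positivity)).2 (by gcongr))
  have hsum := tendsto_sum_range_mul_of_summable summable_log_one_add_inv_div_sqrt
    (fun k => div_nonneg (log_nonneg (le_add_of_nonneg_right (by positivity))) (sqrt_nonneg _))
    (a := fun n k => avg (π * ((k : ℝ) + 1) / ((n : ℝ) + 1)))
    (fun n k hk => (abs_of_nonneg (havg_nonneg _ (hnode_pos n k))).trans_le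
      (hM _ ⟨hnode_pos n k, hnode_le n k hk⟩))
    fun k => havg.comp (tendsto_div_nat_add_one_nhdsGT_zero (by positivity))
  have hlast := tendsto_nat_add_one_mul_orliczPsi_inv.mul_const (avg π)
  rw [zero_mul] at hlast
  have htotal := hsum.add hlast
  rw [add_zero] at htotal
  refine htotal.congr fun n => ?_
  rw [hΨΨinv π pi_pos]
  congr 1
  exact Finset.sum_congr rfl fun k _ => by rw [hΨΨinv _ (hnode_pos n k)]

/-- for `Ψ(t) = (1+|t|)log(1+|t|) − |t|` (with `Ψ′(t) = log(1+t)`),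
at every `L^Ψ`-point `x` of `f ∈ L^Ψ` the approximating quantity
`Σ_{k=0}^n (Ψ′(1/(k+1))/(k+1)^{1/2}) Ψ(w_x f(π(k+1)/(n+1))_Ψ)
  + (n+1) Ψ(1/(n+1)) Ψ(w_x f(π)_Ψ)` tends to `0` as `n → ∞`. -/
theorem statement2
    (Ψ Ψinv : ℝ → ℝ)
    (hΨdef : ∀ t, Ψ t = (1 + |t|) * Real.log (1 + |t|) - |t|)
    -- Ψinv is the inverse of Ψ on [0, ∞)
    (hΨinv₁ : ∀ u ≥ (0 : ℝ), Ψinv (Ψ u) = u) (hΨinv₂ : ∀ v ≥ (0 : ℝ), Ψ (Ψinv v) = v)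
    -- f is 2π-periodic and f ∈ L^Ψ
    (f : ℝ → ℝ) (hper : Function.Periodic f (2 * π))
    (hfint : IntervalIntegrable f volume (-π) π)
    (hfΨ : IntervalIntegrable (fun t => Ψ |f t|) volume (-π) π)
    -- x is an L^Ψ-point of f
    (x : ℝ)
    (hφΨint : IntervalIntegrable (fun t => Ψ |phi f x t|) volume 0 π)
    (hLΨpoint : Filter.Tendsto
      (fun δ => Ψinv ((1 / δ) * ∫ t in (0 : ℝ)..δ, Ψ |phi f x t|))
      (nhdsWithin 0 (Set.Ioi 0)) (nhds 0)) :
    Filter.Tendsto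
      (fun n : ℕ =>
        (∑ k ∈ Finset.range (n + 1),
          (Real.log (1 + 1 / ((k : ℝ) + 1)) / Real.sqrt ((k : ℝ) + 1)) *
            Ψ (Ψinv ((1 / (π * ((k : ℝ) + 1) / ((n : ℝ) + 1))) *
              ∫ t in (0 : ℝ)..(π * ((k : ℝ) + 1) / ((n : ℝ) + 1)), Ψ |phi f x t|)))
        + ((n : ℝ) + 1) * Ψ (1 / ((n : ℝ) + 1)) *
            Ψ (Ψinv ((1 / π) * ∫ t in (0 : ℝ)..π, Ψ |phi f x t|)))
      Filter.atTop (nhds 0) :=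
  statement2_general Ψ Ψinv hΨdef hΨinv₂ f x hφΨint hLΨpoint
end

section
/- Let Ψ be a convex N-function with left derivative Ψ′. Let f be 2π-periodic, x ∈ ℝ, and assume ∫_0^π Ψ(|φ_x(t)|) dt < ∞. Then for every n ≥ 1: Σ_{k=0}^{n} Ψ(1/(k+1)) · Ψ( ((n+1)/π) ∫_{Δ_k^n} |φ_x(t)| dt ) ≤ Σ_{k=0}^{n-1} (1/(k+1)) Ψ′(1/(k+1)) · [ (n+1)/(π(k+1)) ∫_0^{π(k+1)/(n+1)} Ψ(|φ_x(t)|) dt ] + (n+1) Ψ(1/(n+1)) · (1/π) ∫_0^π Ψ(|φ_x(t)|) dt, where Δ_k^n = ( πk/(n+1), π(k+1)/(n+1) ). -/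
open Real MeasureTheory Filter Set

/-- `Ψ` is an N-function. -/
def IsNFunction (Ψ : ℝ → ℝ) : Prop :=
  (∀ u, Ψ (-u) = Ψ u) ∧ ConvexOn ℝ Set.univ Ψ ∧ (∀ u, 0 ≤ Ψ u) ∧
  (∀ u, Ψ u = 0 ↔ u = 0) ∧
  Filter.Tendsto (fun u => Ψ u / u) (nhdsWithin 0 (Set.Ioi 0)) (nhds 0) ∧
  Filter.Tendsto (fun u => Ψ u / u) Filter.atTop Filter.atTop

/-!
On each `Δ_k^n` Jensen's inequality bounds `Ψ` of the mean of `|φ_x|` by the mean of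
`Ψ(|φ_x|)`. Summation by parts then puts the weights on the partial integrals over
`(0, π(k+1)/(n+1))`, with weight differences `Ψ(1/(k+1)) − Ψ(1/(k+2))`, which convexity bounds by
the left derivative: `Ψ′(1/(k+1)) · (1/(k+1) − 1/(k+2)) ≤ Ψ′(1/(k+1))/(k+1)²`.
-/

open Finset in
theorem sum_range_succ_mul_le_of_sub_le (c d b : ℕ → ℝ) (n : ℕ) (hb : ∀ k, 0 ≤ b k)
    (hcd : ∀ k < n, c k - c (k + 1) ≤ d k) :
    ∑ k ∈ range (n + 1), c k * b k ≤
      ∑ k ∈ range n, d k * ∑ j ∈ range (k + 1), b j + c n * ∑ j ∈ range (n + 1), b j := by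
  have hparts := sum_range_by_parts c b (n + 1)
  simp only [smul_eq_mul, Nat.add_sub_cancel] at hparts
  rw [hparts, sub_eq_neg_add, ← sum_neg_distrib]
  gcongr with k hk
  have hB : 0 ≤ ∑ j ∈ range (k + 1), b j := sum_nonneg fun j _ => hb j
  nlinarith [hcd k (mem_range.1 hk)]

theorem ConvexOn.sub_le_mul_sub_of_hasDerivWithinAt_Iic {Ψ : ℝ → ℝ} {q' r s : ℝ}
    (hΨ : ConvexOn ℝ univ Ψ) (hd : HasDerivWithinAt Ψ q' (Iic s) s) (hrs : r < s) :
    Ψ s - Ψ r ≤ q' * (s - r) := by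
  have hslope := hΨ.slope_le_of_hasDerivWithinAt_Iio (mem_univ r) (mem_univ s) hrs
    (hd.mono Iio_subset_Iic_self)
  rwa [slope_def_field, div_le_iff₀ (sub_pos.2 hrs)] at hslope

theorem ConvexOn.sub_map_inv_succ_succ_le {Ψ : ℝ → ℝ} {q' : ℝ} (hΨ : ConvexOn ℝ univ Ψ)
    (hmin : ∀ u, Ψ 0 ≤ Ψ u) (k : ℕ)
    (hd : HasDerivWithinAt Ψ q' (Iic (1 / ((k : ℝ) + 1))) (1 / ((k : ℝ) + 1))) :
    Ψ (1 / ((k : ℝ) + 1)) - Ψ (1 / ((k : ℝ) + 2)) ≤ q' / ((k : ℝ) + 1) ^ 2 := by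
  have hq' : 0 ≤ q' := by
    have := hΨ.sub_le_mul_sub_of_hasDerivWithinAt_Iic hd (by positivity)
    nlinarith [hmin (1 / ((k : ℝ) + 1)), one_div_pos.2 (by positivity : (0 : ℝ) < k + 1)]
  have hgap : 1 / ((k : ℝ) + 1) - 1 / ((k : ℝ) + 2) ≤ 1 / ((k : ℝ) + 1) ^ 2 := by
    rw [div_sub_div _ _ (by positivity) (by positivity),
      div_le_div_iff₀ (by positivity) (by positivity)]
    nlinarith
  calc Ψ (1 / ((k : ℝ) + 1)) - Ψ (1 / ((k : ℝ) + 2))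
      ≤ q' * (1 / ((k : ℝ) + 1) - 1 / ((k : ℝ) + 2)) :=
        hΨ.sub_le_mul_sub_of_hasDerivWithinAt_Iic hd
          (one_div_lt_one_div_of_lt (by positivity) (by linarith))
    _ ≤ q' * (1 / ((k : ℝ) + 1) ^ 2) := mul_le_mul_of_nonneg_left hgap hq'
    _ = q' / ((k : ℝ) + 1) ^ 2 := by ring

theorem ConvexOn.map_interval_average_le {Ψ g : ℝ → ℝ} {a b : ℝ} (hΨ : ConvexOn ℝ univ Ψ)
    (hΨ0 : Ψ 0 = 0) (hpos : ∀ u, 0 ≤ Ψ u) (hab : a < b)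
    (hΨg : IntervalIntegrable (fun t => Ψ (g t)) volume a b) :
    Ψ ((b - a)⁻¹ * ∫ t in a..b, g t) ≤ (b - a)⁻¹ * ∫ t in a..b, Ψ (g t) := by
  by_cases hg : IntervalIntegrable g volume a b
  · have hjensen := hΨ.map_set_average_le (hΨ.continuousOn isOpen_univ) isClosed_univ
      (t := Ioc a b) (μ := volume) (by simpa using hab) (by simp)
      (Eventually.of_forall fun _ => mem_univ _) hg.1 hΨg.1
    rwa [← uIoc_of_le hab.le, interval_average_eq, interval_average_eq] at hjensen
  -- `g` is not integrable, so its integral is the junk value `0`.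
  · rw [intervalIntegral.integral_undef hg, mul_zero, hΨ0]
    exact mul_nonneg (inv_nonneg.2 (sub_pos.2 hab).le)
      (intervalIntegral.integral_nonneg hab.le fun u _ => hpos _)

section UniformPartition

variable {h : ℝ → ℝ} {L m : ℝ}

theorem IntervalIntegrable.uniform_piece (hh : IntervalIntegrable h volume 0 L) (hL : 0 ≤ L)
    (hm : 0 < m) {j : ℕ} (hj : (j : ℝ) + 1 ≤ m) :
    IntervalIntegrable h volume (L * j / m) (L * (j + 1) / m) := by
  have hnode : ∀ y : ℝ, 0 ≤ y → y ≤ m → L * y / m ∈ uIcc 0 L := fun y hy₀ hy => by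
    rw [uIcc_of_le hL]
    exact ⟨by positivity, div_le_of_le_mul₀ hm.le hL (by nlinarith)⟩
  exact hh.mono_set <| uIcc_subset_uIcc (hnode _ (by positivity) (by linarith))
    (hnode _ (by positivity) hj)

theorem sum_integral_uniform_partition (hh : IntervalIntegrable h volume 0 L) (hL : 0 ≤ L)
    (hm : 0 < m) {k : ℕ} (hk : (k : ℝ) ≤ m) :
    ∑ j ∈ Finset.range k, ∫ t in L * j / m..L * (j + 1) / m, h t = ∫ t in 0..L * k / m, h t := by
  have hadj := intervalIntegral.sum_integral_adjacent_intervals (μ := volume) (f := h)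
    (a := fun j : ℕ => L * j / m) (n := k) fun j hj => by
      have hj' : ((j + 1 : ℕ) : ℝ) ≤ k := Nat.cast_le.2 hj
      simpa using hh.uniform_piece hL hm (j := j) (by push_cast at hj'; linarith)
  simpa using hadj

end UniformPartition

open Finset in
theorem sum_map_inv_succ_mul_map_average_le {Ψ q g : ℝ → ℝ} {L : ℝ} (hΨ : ConvexOn ℝ univ Ψ)
    (hΨ0 : Ψ 0 = 0) (hpos : ∀ u, 0 ≤ Ψ u)
    (hq : ∀ s > (0 : ℝ), HasDerivWithinAt Ψ (q s) (Iic s) s) (hL : 0 < L)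
    (hΨg : IntervalIntegrable (fun t => Ψ (g t)) volume 0 L) (n : ℕ) :
    ∑ k ∈ range (n + 1), Ψ (1 / ((k : ℝ) + 1)) *
        Ψ (((n : ℝ) + 1) / L * ∫ t in L * k / ((n : ℝ) + 1)..L * ((k : ℝ) + 1) / ((n : ℝ) + 1), g t)
      ≤ ∑ k ∈ range n, 1 / ((k : ℝ) + 1) * q (1 / ((k : ℝ) + 1)) *
          (((n : ℝ) + 1) / (L * ((k : ℝ) + 1)) *
            ∫ t in (0 : ℝ)..L * ((k : ℝ) + 1) / ((n : ℝ) + 1), Ψ (g t))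
        + ((n : ℝ) + 1) * Ψ (1 / ((n : ℝ) + 1)) * (1 / L * ∫ t in (0 : ℝ)..L, Ψ (g t)) := by
  set m : ℝ := (n : ℝ) + 1 with hm_def
  have hm : 0 < m := by positivity
  set b : ℕ → ℝ := fun j => m / L * ∫ t in L * j / m..L * (j + 1) / m, Ψ (g t)
  have hb : ∀ j, 0 ≤ b j := fun j => mul_nonneg (by positivity)
    (intervalIntegral.integral_nonneg (by gcongr; linarith) fun u _ => hpos _)
  have hpartial : ∀ k ≤ n,
      ∑ j ∈ range (k + 1), b j = m / L * ∫ t in 0..L * (k + 1) / m, Ψ (g t) := by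
    intro k hk
    rw [← mul_sum, sum_integral_uniform_partition hΨg hL.le hm (by simp [hm_def, hk])]
    push_cast
    rfl
  have hjensen : ∀ k ≤ n, Ψ (m / L * ∫ t in L * k / m..L * (k + 1) / m, g t) ≤ b k := by
    intro k hk
    have hlt : L * k / m < L * (k + 1) / m := by gcongr; linarith
    have := hΨ.map_interval_average_le hΨ0 hpos hlt
      (hΨg.uniform_piece hL.le hm (by simp [hm_def, hk]))
    rwa [show L * (k + 1) / m - L * k / m = L / m by ring, inv_div] at this
  have hcoeff : ∀ k < n, Ψ (1 / ((k : ℝ) + 1)) - Ψ (1 / (((k + 1 : ℕ) : ℝ) + 1))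
      ≤ q (1 / ((k : ℝ) + 1)) / ((k : ℝ) + 1) ^ 2 := fun k _ => by
    have := hΨ.sub_map_inv_succ_succ_le (fun u => hΨ0.le.trans (hpos u)) k (hq _ (by positivity))
    push_cast
    ring_nf at this ⊢
    exact this
  calc _ ≤ ∑ k ∈ range (n + 1), Ψ (1 / ((k : ℝ) + 1)) * b k :=
        sum_le_sum fun k hk => mul_le_mul_of_nonneg_left
          (hjensen k (Nat.lt_succ_iff.1 (mem_range.1 hk))) (hpos _)
    _ ≤ ∑ k ∈ range n, q (1 / ((k : ℝ) + 1)) / ((k : ℝ) + 1) ^ 2 * ∑ j ∈ range (k + 1), b j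
          + Ψ (1 / ((n : ℝ) + 1)) * ∑ j ∈ range (n + 1), b j :=
        sum_range_succ_mul_le_of_sub_le (fun k => Ψ (1 / ((k : ℝ) + 1))) _ b n hb hcoeff
    _ = _ := by
      rw [hpartial n le_rfl, show L * ((n : ℝ) + 1) / m = L by rw [hm_def]; field_simp]
      congr 1
      · refine sum_congr rfl fun k hk => ?_
        rw [hpartial k (mem_range.1 hk).le]
        field_simp
      · ring

theorem statement5_general
    (Ψ q : ℝ → ℝ)
    (hΨ : IsNFunction Ψ)
    -- q = Ψ′ is the left derivative of Ψ, which is nondecreasing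
    (hq : ∀ s > (0 : ℝ), HasDerivWithinAt Ψ (q s) (Set.Iic s) s)
    -- f is 2π-periodic, x ∈ ℝ, and ∫_0^π Ψ(|φ_x(t)|) dt < ∞
    (f : ℝ → ℝ) (x : ℝ)
    (hφΨint : IntervalIntegrable (fun t => Ψ |phi f x t|) volume 0 π) :
    ∀ n : ℕ, 1 ≤ n →
      (∑ k ∈ Finset.range (n + 1),
        Ψ (1 / ((k : ℝ) + 1)) *
          Ψ ((((n : ℝ) + 1) / π) *
            ∫ t in (π * (k : ℝ) / ((n : ℝ) + 1))..(π * ((k : ℝ) + 1) / ((n : ℝ) + 1)),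
              |phi f x t|))
      ≤ (∑ k ∈ Finset.range n,
          (1 / ((k : ℝ) + 1)) * q (1 / ((k : ℝ) + 1)) *
            ((((n : ℝ) + 1) / (π * ((k : ℝ) + 1))) *
              ∫ t in (0 : ℝ)..(π * ((k : ℝ) + 1) / ((n : ℝ) + 1)), Ψ |phi f x t|))
        + ((n : ℝ) + 1) * Ψ (1 / ((n : ℝ) + 1)) *
            ((1 / π) * ∫ t in (0 : ℝ)..π, Ψ |phi f x t|) := by
  intro n _
  obtain ⟨-, hconv, hpos, hzero, -, -⟩ := hΨ
  exact sum_map_inv_succ_mul_map_average_le hconv ((hzero 0).2 rfl) hpos hq pi_pos hφΨint n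

/-- the Jensen + Abel-transformation inequality
`Σ_{k=0}^{n} Ψ(1/(k+1)) Ψ(((n+1)/π)∫_{Δ_k^n}|φ_x|)
 ≤ Σ_{k=0}^{n-1} (1/(k+1))Ψ′(1/(k+1)) [(n+1)/(π(k+1)) ∫_0^{π(k+1)/(n+1)} Ψ(|φ_x|)]
   + (n+1)Ψ(1/(n+1)) (1/π)∫_0^π Ψ(|φ_x|)` for all `n ≥ 1`,
where `Δ_k^n = (πk/(n+1), π(k+1)/(n+1))`. -/
theorem statement5
    (Ψ q : ℝ → ℝ)
    (hΨ : IsNFunction Ψ)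
    -- q = Ψ′ is the left derivative of Ψ, which is nondecreasing
    (hq : ∀ s > (0 : ℝ), HasDerivWithinAt Ψ (q s) (Set.Iic s) s)
    (hqmono : MonotoneOn q (Set.Ioi 0))
    -- f is 2π-periodic, x ∈ ℝ, and ∫_0^π Ψ(|φ_x(t)|) dt < ∞
    (f : ℝ → ℝ) (hper : Function.Periodic f (2 * π)) (x : ℝ)
    (hφΨint : IntervalIntegrable (fun t => Ψ |phi f x t|) volume 0 π) :
    ∀ n : ℕ, 1 ≤ n →
      (∑ k ∈ Finset.range (n + 1),
        Ψ (1 / ((k : ℝ) + 1)) *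
          Ψ ((((n : ℝ) + 1) / π) *
            ∫ t in (π * (k : ℝ) / ((n : ℝ) + 1))..(π * ((k : ℝ) + 1) / ((n : ℝ) + 1)),
              |phi f x t|))
      ≤ (∑ k ∈ Finset.range n,
          (1 / ((k : ℝ) + 1)) * q (1 / ((k : ℝ) + 1)) *
            ((((n : ℝ) + 1) / (π * ((k : ℝ) + 1))) *
              ∫ t in (0 : ℝ)..(π * ((k : ℝ) + 1) / ((n : ℝ) + 1)), Ψ |phi f x t|))
        + ((n : ℝ) + 1) * Ψ (1 / ((n : ℝ) + 1)) *
            ((1 / π) * ∫ t in (0 : ℝ)..π, Ψ |phi f x t|) :=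
  statement5_general Ψ q hΨ hq f x hφΨint
end

section
/- Let g : (0, π] → [0,∞) be integrable on (0, π] with (1/δ) ∫_0^δ g(t) dt → 0 as δ → 0⁺. Then max_{0 ≤ k ≤ n} [ (n+1)/(π (k+1)^{3/2}) ∫_0^{π(k+1)/(n+1)} g(t) dt ] → 0 as n → ∞. -/
open Real MeasureTheory Filter Set

/-!
With `δₖ = π(k+1)/(n+1)` and `A δ = (1/δ) ∫₀^δ g`, the `k`-th term is
`A δₖ / √(k+1)`. `A` is bounded on `(0, π]` by some `M`: it tends to `0` at `0⁺`
and is at most `(∫₀^π g)/δ` elsewhere. Given `ε > 0`, pick `K` with `M < ε √K`.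
Terms with `k + 1 ≥ K` are below `ε` because of the factor `1/√(k+1)`; for
`k + 1 < K` we have `δₖ < πK/(n+1) → 0`, so these terms are at most `A δₖ < ε`
once `n` is large.
-/

lemma bddAbove_image_Ioc_of_tendsto_of_mul_le {A : ℝ → ℝ} {a C : ℝ}
    (hA : Tendsto A (nhdsWithin 0 (Ioi 0)) (nhds 0)) (hC : ∀ δ ∈ Ioc 0 a, δ * A δ ≤ C) :
    BddAbove (A '' Ioc 0 a) := by
  obtain ⟨η, hη, hAη⟩ := mem_nhdsGT_iff_exists_Ioo_subset.1 (hA (Iio_mem_nhds one_pos))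
  refine ⟨max 1 (|C| / η), ?_⟩
  rintro _ ⟨δ, hδ, rfl⟩
  rcases lt_or_ge δ η with hδη | hηδ
  · exact (hAη ⟨hδ.1, hδη⟩).le.trans (le_max_left _ _)
  · calc A δ ≤ |C| / δ := by
          rw [le_div_iff₀ hδ.1, mul_comm]
          exact (hC δ hδ).trans (le_abs_self C)
      _ ≤ |C| / η := div_le_div_of_nonneg_left (abs_nonneg C) hη hηδ
      _ ≤ _ := le_max_right _ _

lemma mul_add_one_div_mem_Ioc {a : ℝ} (ha : 0 < a) {n k : ℕ} (hk : k ∈ Finset.range (n + 1)) :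
    a * ((k : ℝ) + 1) / ((n : ℝ) + 1) ∈ Ioc 0 a := by
  have hkn : (k : ℝ) + 1 ≤ (n : ℝ) + 1 := by
    exact_mod_cast Nat.succ_le_succ (Nat.lt_succ_iff.mp (Finset.mem_range.mp hk))
  refine ⟨by positivity, ?_⟩
  rw [div_le_iff₀ (by positivity)]
  exact mul_le_mul_of_nonneg_left hkn ha.le

theorem tendsto_sup'_div_sqrt_of_tendsto_nhdsGT_zero {A : ℝ → ℝ} {a : ℝ} (ha : 0 < a)
    (hA0 : ∀ δ ∈ Ioc 0 a, 0 ≤ A δ) (hAbdd : BddAbove (A '' Ioc 0 a))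
    (hA : Tendsto A (nhdsWithin 0 (Ioi 0)) (nhds 0)) :
    Tendsto (fun n : ℕ => (Finset.range (n + 1)).sup' Finset.nonempty_range_add_one
      (fun k => A (a * ((k : ℝ) + 1) / ((n : ℝ) + 1)) / √((k : ℝ) + 1))) atTop (nhds 0) := by
  obtain ⟨M, hM⟩ := hAbdd
  refine tendsto_order.2 ⟨fun b hb => Eventually.of_forall fun n => ?_, fun ε hε => ?_⟩
  · have h0 : 0 ∈ Finset.range (n + 1) := Finset.mem_range.2 n.succ_pos
    exact hb.trans_le <| Finset.le_sup'_of_le _ h0 <|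
      div_nonneg (hA0 _ (mul_add_one_div_mem_Ioc ha h0)) (sqrt_nonneg _)
  obtain ⟨K, hK⟩ : ∃ K : ℕ, M < ε * √K :=
    (((tendsto_sqrt_atTop.comp tendsto_natCast_atTop_atTop).const_mul_atTop
      hε).eventually_gt_atTop M).exists
  obtain ⟨η, hη, hAη⟩ := mem_nhdsGT_iff_exists_Ioo_subset.1 (hA (Iio_mem_nhds hε))
  have hsmall : ∀ᶠ n : ℕ in atTop, a * K / ((n : ℝ) + 1) < η :=
    (tendsto_const_nhds.div_atTop (tendsto_atTop_add_const_right _ 1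
      tendsto_natCast_atTop_atTop)).eventually (gt_mem_nhds hη)
  filter_upwards [hsmall] with n hn
  refine (Finset.sup'_lt_iff _).2 fun k hk => ?_
  have hδ := mul_add_one_div_mem_Ioc ha hk
  rcases lt_or_ge ((k : ℝ) + 1) K with hkK | hKk
  · have hδη : a * ((k : ℝ) + 1) / ((n : ℝ) + 1) < η :=
      lt_of_le_of_lt (by gcongr) hn
    calc _ ≤ A (a * ((k : ℝ) + 1) / ((n : ℝ) + 1)) :=
          div_le_self (hA0 _ hδ) (one_le_sqrt.2 (by linarith [k.cast_nonneg (α := ℝ)]))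
      _ < ε := hAη ⟨hδ.1, hδη⟩
  · rw [div_lt_iff₀ (sqrt_pos.2 (by positivity))]
    calc _ ≤ M := hM ⟨_, hδ, rfl⟩
      _ < ε * √K := hK
      _ ≤ ε * √((k : ℝ) + 1) := by gcongr

lemma div_mul_rpow_three_halves_mul_eq (a x y F : ℝ) (hx : 0 < x) :
    y / (a * x ^ ((3 : ℝ) / 2)) * F = 1 / (a * x / y) * F / √x := by
  rw [show (3 : ℝ) / 2 = 1 + 1 / 2 by norm_num, rpow_add hx, rpow_one, ← sqrt_eq_rpow]
  field_simp

/-- if `g : (0,π] → [0,∞)` is integrable on `(0,π]` with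
`(1/δ)∫_0^δ g → 0` as `δ → 0⁺`, then
`max_{0 ≤ k ≤ n} [(n+1)/(π(k+1)^{3/2}) ∫_0^{π(k+1)/(n+1)} g] → 0` as `n → ∞`. -/
theorem statement7
    (g : ℝ → ℝ)
    (hg_nonneg : ∀ t ∈ Set.Ioc (0 : ℝ) π, 0 ≤ g t)
    (hg_int : IntervalIntegrable g volume 0 π)
    (havg : Filter.Tendsto (fun δ => (1 / δ) * ∫ t in (0 : ℝ)..δ, g t)
      (nhdsWithin 0 (Set.Ioi 0)) (nhds 0)) :
    Filter.Tendsto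
      (fun n : ℕ =>
        (Finset.range (n + 1)).sup' Finset.nonempty_range_add_one
          (fun k => (((n : ℝ) + 1) / (π * ((k : ℝ) + 1) ^ ((3 : ℝ) / 2))) *
            ∫ t in (0 : ℝ)..(π * ((k : ℝ) + 1) / ((n : ℝ) + 1)), g t))
      Filter.atTop (nhds 0) := by
  have hg_ae : 0 ≤ᵐ[volume.restrict (Ioc 0 π)] g :=
    ae_restrict_of_forall_mem measurableSet_Ioc hg_nonneg
  have hint_nonneg : ∀ δ ∈ Ioc 0 π, 0 ≤ ∫ t in (0 : ℝ)..δ, g t := fun δ hδ => by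
    rw [intervalIntegral.integral_of_le hδ.1.le]
    exact setIntegral_nonneg measurableSet_Ioc fun t ht => hg_nonneg t ⟨ht.1, ht.2.trans hδ.2⟩
  have hint_le : ∀ δ ∈ Ioc 0 π,
      δ * ((1 / δ) * ∫ t in (0 : ℝ)..δ, g t) ≤ ∫ t in (0 : ℝ)..π, g t := fun δ hδ => by
    rw [← mul_assoc, mul_one_div_cancel hδ.1.ne', one_mul]
    exact intervalIntegral.integral_mono_interval le_rfl hδ.1.le hδ.2 hg_ae hg_int
  refine (tendsto_sup'_div_sqrt_of_tendsto_nhdsGT_zero pi_pos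
    (fun δ hδ => mul_nonneg (one_div_nonneg.2 hδ.1.le) (hint_nonneg δ hδ))
    (bddAbove_image_Ioc_of_tendsto_of_mul_le havg hint_le) havg).congr fun n => ?_
  exact Finset.sup'_congr _ rfl fun k _ =>
    (div_mul_rpow_three_halves_mul_eq _ _ _ _ (by positivity)).symm
end

section
/- Let Ψ be a convex N-function with left derivative q = Ψ′ such that Σ_{k=0}^∞ (k+1)^{-1/2} q(1/(k+1)) < ∞. Let f be 2π-periodic with ∫_0^π Ψ(|φ_x(t)|) dt < ∞, and let x be a point with (1/δ) ∫_0^δ Ψ(|φ_x(t)|) dt → 0 as δ → 0⁺. Then Σ_{k=0}^{n} Ψ(1/(k+1)) · Ψ( ((n+1)/π) ∫_{Δ_k^n} |φ_x(t)| dt ) → 0 as n → ∞, where Δ_k^n = ( πk/(n+1), π(k+1)/(n+1) ). -/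
/-!
Write `c_k = Ψ(1/(k+1))`, `A(δ) = (1/δ) ∫_0^δ Ψ(|φ_x|)` and
`u_j = ((n+1)/π) ∫_0^{πj/(n+1)} Ψ(|φ_x|)`. Jensen's inequality on the cell `Δ_k^n` bounds the
`k`-th term by `c_k (u_{k+1} - u_k)`, and Abel summation rewrites the sum of these bounds as
`c_n (n+1) A(π) + Σ_{k<n} (c_k - c_{k+1}) (k+1) A(π(k+1)/(n+1))`.
The first term tends to `0` because `Ψ(s)/s → 0`. In the second, the weights are summable with
sum at most `Σ c_k < ∞` (as `Ψ(s) ≤ s Ψ'(s)`), while `A` is bounded on `(0, π]` and tends to `0`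
at `0⁺`, so dominated convergence for series applies.
-/

open Real MeasureTheory Filter Set

open Finset Topology

theorem sum_range_succ_mul_sub_eq (c u : ℕ → ℝ) (n : ℕ) (hu : u 0 = 0) :
    ∑ k ∈ range (n + 1), c k * (u (k + 1) - u k)
      = c n * u (n + 1) + ∑ k ∈ range n, (c k - c (k + 1)) * u (k + 1) := by
  induction n with
  | zero => simp [hu]
  | succ n ih =>
    rw [sum_range_succ, ih, sum_range_succ]
    ring

theorem summable_sub_succ_mul_succ {c : ℕ → ℝ} (hc0 : ∀ k, 0 ≤ c k) (hc : Antitone c)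
    (hcs : Summable c) : Summable fun k : ℕ => (c k - c (k + 1)) * ((k : ℝ) + 1) := by
  refine summable_of_sum_range_le (c := ∑' k, c k)
    (fun k => mul_nonneg (sub_nonneg.2 (hc k.le_succ)) (by positivity)) fun N => ?_
  have hsum := sum_range_succ_mul_sub_eq c (fun k => (k : ℝ)) N Nat.cast_zero
  simp only [Nat.cast_succ, add_sub_cancel_left, mul_one] at hsum
  have : ∑ k ∈ range (N + 1), c k ≤ ∑' k, c k := hcs.sum_le_tsum _ fun k _ => hc0 k
  nlinarith [hc0 N, (N.cast_nonneg : (0 : ℝ) ≤ N)]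

theorem tendsto_sum_range_mul_of_summable_s8 {d : ℕ → ℝ} (hd0 : ∀ k, 0 ≤ d k) (hd : Summable d)
    {g : ℕ → ℕ → ℝ} {M : ℝ} (hgM : ∀ n, ∀ k < n, |g n k| ≤ M)
    (hg : ∀ k, Tendsto (fun n => g n k) atTop (𝓝 0)) :
    Tendsto (fun n => ∑ k ∈ range n, d k * g n k) atTop (𝓝 0) := by
  have hsum : ∀ n,
      ∑ k ∈ range n, d k * g n k = ∑' k, if k < n then d k * g n k else 0 := by
    intro n
    rw [tsum_eq_sum (s := range n) fun k hk => if_neg (by simpa using hk)]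
    exact sum_congr rfl fun k hk => (if_pos (mem_range.1 hk)).symm
  simp_rw [hsum]
  have hlim := tendsto_tsum_of_dominated_convergence (𝓕 := atTop)
    (f := fun n k => if k < n then d k * g n k else 0) (g := fun _ => 0)
    (hd.mul_right |M|) (fun k => ?_) (Eventually.of_forall fun n k => ?_)
  · simpa using hlim
  · refine Tendsto.congr' ?_ (by simpa using (hg k).const_mul (d k))
    filter_upwards [eventually_gt_atTop k] with n hn
    rw [if_pos hn]
  · split_ifs with hk
    · rw [norm_mul, Real.norm_of_nonneg (hd0 k)]
      exact mul_le_mul_of_nonneg_left ((hgM n k hk).trans (le_abs_self M)) (hd0 k)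
    · simpa using mul_nonneg (hd0 k) (abs_nonneg M)

noncomputable def averageFromZero (h : ℝ → ℝ) (δ : ℝ) : ℝ := 1 / δ * ∫ t in (0 : ℝ)..δ, h t

theorem averageFromZero_nonneg {h : ℝ → ℝ} (hh : ∀ t, 0 ≤ h t) {δ : ℝ} (hδ : 0 ≤ δ) :
    0 ≤ averageFromZero h δ :=
  mul_nonneg (by positivity) (intervalIntegral.integral_nonneg hδ fun t _ => hh t)

theorem mul_div_succ_mem_uIcc (L : ℝ) {j n : ℕ} (hj : j ≤ n + 1) :
    L * j / (n + 1) ∈ uIcc 0 L := by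
  have hθ : (j : ℝ) / (n + 1) ∈ Icc (0 : ℝ) 1 :=
    ⟨by positivity, (div_le_one (by positivity)).2 (by exact_mod_cast hj)⟩
  rw [mul_div_assoc]
  rcases le_total 0 L with hL | hL
  · rw [uIcc_of_le hL]
    exact ⟨mul_nonneg hL hθ.1, mul_le_of_le_one_right hL hθ.2⟩
  · rw [uIcc_of_ge hL]
    exact ⟨le_mul_of_le_one_right hL hθ.2, mul_nonpos_of_nonpos_of_nonneg hL hθ.1⟩

theorem uIcc_partition_subset (L : ℝ) {k n : ℕ} (hk : k ≤ n) :
    uIcc (L * k / (n + 1)) (L * (k + 1) / (n + 1)) ⊆ uIcc 0 L := by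
  refine uIcc_subset_uIcc (mul_div_succ_mem_uIcc L (by omega)) ?_
  exact_mod_cast mul_div_succ_mem_uIcc L (j := k + 1) (by omega)

theorem sum_mul_integral_partition_eq {h : ℝ → ℝ} {L : ℝ} (hL : 0 < L)
    (hint : IntervalIntegrable h volume 0 L) (c : ℕ → ℝ) (n : ℕ) :
    ∑ k ∈ range (n + 1),
        c k * ((n + 1) / L * ∫ t in L * k / (n + 1)..L * (k + 1) / (n + 1), h t)
      = c n * (n + 1) * averageFromZero h L + ∑ k ∈ range n,
          (c k - c (k + 1)) * (k + 1) * averageFromZero h (L * (k + 1) / (n + 1)) := by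
  set u : ℕ → ℝ := fun j => (n + 1) / L * ∫ t in (0 : ℝ)..L * j / (n + 1), h t
  have hnode : ∀ j ≤ n + 1, IntervalIntegrable h volume 0 (L * j / (n + 1)) := fun j hj =>
    hint.mono_set (uIcc_subset_uIcc left_mem_uIcc (mul_div_succ_mem_uIcc L hj))
  have hcell : ∀ k ∈ range (n + 1),
      (n + 1) / L * ∫ t in L * k / (n + 1)..L * (k + 1) / (n + 1), h t = u (k + 1) - u k := by
    intro k hk
    have hk := mem_range.1 hk
    simp only [u, ← mul_sub, Nat.cast_succ]
    rw [intervalIntegral.integral_interval_sub_left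
      (by exact_mod_cast hnode (k + 1) (by omega)) (hnode k (by omega))]
  have hu0 : u 0 = 0 := by simp [u]
  rw [sum_congr rfl fun k hk => by rw [hcell k hk], sum_range_succ_mul_sub_eq c u n hu0]
  congr 1
  · simp only [u, averageFromZero, Nat.cast_succ]
    field_simp
  · refine sum_congr rfl fun k _ => ?_
    simp only [u, averageFromZero, Nat.cast_succ]
    field_simp

theorem exists_averageFromZero_le {h : ℝ → ℝ} {L : ℝ} (hh : ∀ t, 0 ≤ h t)
    (hint : IntervalIntegrable h volume 0 L)
    (hlim : Tendsto (averageFromZero h) (𝓝[>] 0) (𝓝 0)) :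
    ∃ M, ∀ δ ∈ Ioc 0 L, averageFromZero h δ ≤ M := by
  obtain ⟨ε, hε, hsmall⟩ := Metric.eventually_nhds_iff.1
    (eventually_nhdsWithin_iff.1 (hlim.eventually (eventually_lt_nhds one_pos)))
  refine ⟨max 1 (1 / ε * ∫ t in (0 : ℝ)..L, h t), fun δ ⟨hδ, hδL⟩ => ?_⟩
  rcases lt_or_ge δ ε with hδε | hδε
  · refine le_max_of_le_left (hsmall ?_ hδ).le
    rwa [Real.dist_eq, sub_zero, abs_of_pos hδ]
  · refine le_max_of_le_right (mul_le_mul (one_div_le_one_div_of_le hε hδε) ?_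
      (intervalIntegral.integral_nonneg hδ.le fun t _ => hh t) (by positivity))
    exact intervalIntegral.integral_mono_interval le_rfl hδ.le hδL
      (Eventually.of_forall hh) hint

theorem tendsto_sum_mul_integral_partition {h : ℝ → ℝ} {L : ℝ} (hL : 0 < L)
    (hh : ∀ t, 0 ≤ h t) (hint : IntervalIntegrable h volume 0 L)
    (hlim : Tendsto (averageFromZero h) (𝓝[>] 0) (𝓝 0))
    {c : ℕ → ℝ} (hc0 : ∀ k, 0 ≤ c k) (hc : Antitone c) (hcs : Summable c)
    (hcn : Tendsto (fun n : ℕ => c n * (n + 1)) atTop (𝓝 0)) :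
    Tendsto (fun n : ℕ => ∑ k ∈ range (n + 1),
        c k * ((n + 1) / L * ∫ t in L * k / (n + 1)..L * (k + 1) / (n + 1), h t))
      atTop (𝓝 0) := by
  simp_rw [sum_mul_integral_partition_eq hL hint]
  obtain ⟨M, hM⟩ := exists_averageFromZero_le hh hint hlim
  have hnode_pos : ∀ n k : ℕ, 0 < L * (k + 1) / (n + 1) := fun n k => by positivity
  have hcells : Tendsto (fun n : ℕ => ∑ k ∈ range n,
      (c k - c (k + 1)) * (k + 1) * averageFromZero h (L * (k + 1) / (n + 1))) atTop (𝓝 0) := by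
    refine tendsto_sum_range_mul_of_summable_s8
      (fun k => mul_nonneg (sub_nonneg.2 (hc k.le_succ)) (by positivity))
      (summable_sub_succ_mul_succ hc0 hc hcs) (M := M) (fun n k hk => ?_) fun k => ?_
    · have hδ := hnode_pos n k
      rw [abs_of_nonneg (averageFromZero_nonneg hh hδ.le)]
      refine hM _ ⟨hδ, div_le_of_le_mul₀ (by positivity) hL.le ?_⟩
      have : (k : ℝ) + 1 ≤ n + 1 := by exact_mod_cast Nat.succ_le_succ hk.le
      nlinarith
    · refine hlim.comp (tendsto_nhdsWithin_iff.2 ⟨?_, Eventually.of_forall (hnode_pos · k)⟩)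
      simpa [mul_div_assoc, div_eq_mul_inv, mul_assoc] using
        (tendsto_one_div_add_atTop_nhds_zero_nat (𝕜 := ℝ)).const_mul (L * (k + 1))
  simpa using (hcn.mul_const (averageFromZero h L)).add hcells

section ConvexFunction

variable {Ψ : ℝ → ℝ}

theorem ConvexOn.map_interval_average_le_of_nonneg (hconv : ConvexOn ℝ univ Ψ) (h0 : Ψ 0 = 0)
    (hnn : ∀ u, 0 ≤ Ψ u) {w : ℝ → ℝ} {a b : ℝ} (hab : a < b)
    (hΨw : IntervalIntegrable (fun t => Ψ (w t)) volume a b) :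
    Ψ ((b - a)⁻¹ * ∫ t in a..b, w t) ≤ (b - a)⁻¹ * ∫ t in a..b, Ψ (w t) := by
  by_cases hw : IntervalIntegrable w volume a b
  · have hvol : volume (uIoc a b) = ENNReal.ofReal (b - a) := by
      rw [uIoc_of_le hab.le, Real.volume_Ioc]
    have hjensen := hconv.map_set_average_le (μ := volume) (t := uIoc a b)
      (hconv.continuousOn isOpen_univ) isClosed_univ
      (by simpa [hvol] using hab) (by simp [hvol]) (Eventually.of_forall fun _ => mem_univ _)
      hw.def' hΨw.def'
    simpa only [interval_average_eq, smul_eq_mul] using hjensen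
  -- A non-integrable `w` has the junk integral `0`, and `Ψ 0 = 0`.
  · rw [intervalIntegral.integral_undef hw, mul_zero, h0]
    exact mul_nonneg (inv_nonneg.2 (sub_pos.2 hab).le)
      (intervalIntegral.integral_nonneg hab.le fun t _ => hnn _)

theorem ConvexOn.map_mul_integral_partition_le (hconv : ConvexOn ℝ univ Ψ) (h0 : Ψ 0 = 0)
    (hnn : ∀ u, 0 ≤ Ψ u) {w : ℝ → ℝ} {L : ℝ} (hL : 0 < L)
    (hint : IntervalIntegrable (fun t => Ψ (w t)) volume 0 L) {k n : ℕ} (hk : k ≤ n) :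
    Ψ ((n + 1) / L * ∫ t in L * k / (n + 1)..L * (k + 1) / (n + 1), w t)
      ≤ (n + 1) / L * ∫ t in L * k / (n + 1)..L * (k + 1) / (n + 1), Ψ (w t) := by
  have hlen : (L * (k + 1) / (n + 1) - L * k / (n + 1))⁻¹ = (n + 1) / L := by
    field_simp
    ring
  rw [← hlen]
  exact hconv.map_interval_average_le_of_nonneg h0 hnn (by gcongr; linarith)
    (hint.mono_set (uIcc_partition_subset L hk))

theorem ConvexOn.le_mul_of_hasDerivWithinAt_Iic (hconv : ConvexOn ℝ univ Ψ) (h0 : Ψ 0 = 0)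
    {s q : ℝ} (hs : 0 < s) (hq : HasDerivWithinAt Ψ q (Iic s) s) : Ψ s ≤ s * q := by
  have := hconv.slope_le_of_hasDerivWithinAt_Iio (mem_univ 0) (mem_univ s) hs
    (hq.mono Iio_subset_Iic_self)
  rwa [slope_def_field, h0, sub_zero, sub_zero, div_le_iff₀ hs, mul_comm] at this

theorem ConvexOn.antitone_apply_one_div_succ (hconv : ConvexOn ℝ univ Ψ) (h0 : Ψ 0 = 0)
    (hnn : ∀ u, 0 ≤ Ψ u) : Antitone fun k : ℕ => Ψ (1 / ((k : ℝ) + 1)) := by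
  refine antitone_nat_of_succ_le fun k => ?_
  refine hconv.le_right_of_left_le'' (mem_univ 0) (mem_univ _) (by positivity) ?_
    (by simp [h0, hnn])
  gcongr
  simp

theorem summable_apply_one_div_succ {q : ℝ → ℝ} (hconv : ConvexOn ℝ univ Ψ) (h0 : Ψ 0 = 0)
    (hnn : ∀ u, 0 ≤ Ψ u) (hq : ∀ s > (0 : ℝ), HasDerivWithinAt Ψ (q s) (Iic s) s)
    (hqsum : Summable fun k : ℕ => 1 / √((k : ℝ) + 1) * q (1 / ((k : ℝ) + 1))) :
    Summable fun k : ℕ => Ψ (1 / ((k : ℝ) + 1)) := by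
  refine hqsum.of_nonneg_of_le (fun k => hnn _) fun k => ?_
  have hs : (0 : ℝ) < 1 / ((k : ℝ) + 1) := by positivity
  have hΨq := hconv.le_mul_of_hasDerivWithinAt_Iic h0 hs (hq _ hs)
  have hq0 : 0 ≤ q (1 / ((k : ℝ) + 1)) := nonneg_of_mul_nonneg_right (hΨq.trans' (hnn _)) hs
  refine hΨq.trans (mul_le_mul_of_nonneg_right ?_ hq0)
  gcongr
  exact sqrt_le_self_iff.2 (Or.inr (by simp))

theorem tendsto_apply_one_div_succ_mul_succ
    (hsmall : Tendsto (fun u => Ψ u / u) (𝓝[>] 0) (𝓝 0)) :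
    Tendsto (fun n : ℕ => Ψ (1 / ((n : ℝ) + 1)) * (n + 1)) atTop (𝓝 0) := by
  have hs : Tendsto (fun n : ℕ => 1 / ((n : ℝ) + 1)) atTop (𝓝[>] 0) :=
    tendsto_nhdsWithin_iff.2
      ⟨tendsto_one_div_add_atTop_nhds_zero_nat,
        Eventually.of_forall fun n => mem_Ioi.2 (by positivity)⟩
  refine (hsmall.comp hs).congr fun n => ?_
  simp [div_eq_mul_inv]

end ConvexFunction

theorem statement8_general
    (Ψ q : ℝ → ℝ)
    (hΨ : IsNFunction Ψ)
    -- q = Ψ′ is the left derivative of Ψ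
    (hq : ∀ s > (0 : ℝ), HasDerivWithinAt Ψ (q s) (Set.Iic s) s)
    -- Σ (k+1)^{-1/2} q(1/(k+1)) < ∞
    (hqsum : Summable (fun k : ℕ => (1 / Real.sqrt ((k : ℝ) + 1)) * q (1 / ((k : ℝ) + 1))))
    -- f is 2π-periodic with ∫_0^π Ψ(|φ_x|) < ∞
    (f : ℝ → ℝ) (x : ℝ)
    (hφΨint : IntervalIntegrable (fun t => Ψ |phi f x t|) volume 0 π)
    -- x is an L^Ψ-point of f
    (hLΨpoint : Filter.Tendsto (fun δ => (1 / δ) * ∫ t in (0 : ℝ)..δ, Ψ |phi f x t|)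
      (nhdsWithin 0 (Set.Ioi 0)) (nhds 0)) :
    Filter.Tendsto
      (fun n : ℕ =>
        ∑ k ∈ Finset.range (n + 1),
          Ψ (1 / ((k : ℝ) + 1)) *
            Ψ ((((n : ℝ) + 1) / π) *
              ∫ t in (π * (k : ℝ) / ((n : ℝ) + 1))..(π * ((k : ℝ) + 1) / ((n : ℝ) + 1)),
                |phi f x t|))
      Filter.atTop (nhds 0) := by
  obtain ⟨-, hconv, hnn, hzero, hsmall, -⟩ := hΨ
  have h0 : Ψ 0 = 0 := (hzero 0).2 rfl
  have hbound := tendsto_sum_mul_integral_partition pi_pos (fun t => hnn _) hφΨint hLΨpoint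
    (fun k => hnn _) (hconv.antitone_apply_one_div_succ h0 hnn)
    (summable_apply_one_div_succ hconv h0 hnn hq hqsum)
    (tendsto_apply_one_div_succ_mul_succ hsmall)
  refine squeeze_zero (fun n => sum_nonneg fun k _ => mul_nonneg (hnn _) (hnn _))
    (fun n => sum_le_sum fun k hk => mul_le_mul_of_nonneg_left ?_ (hnn _)) hbound
  exact hconv.map_mul_integral_partition_le h0 hnn pi_pos hφΨint (mem_range_succ_iff.1 hk)

/-- at an `L^Ψ`-point `x` of a 2π-periodic `f` with
`∫_0^π Ψ(|φ_x|) < ∞`, one has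
`Σ_{k=0}^{n} Ψ(1/(k+1)) Ψ(((n+1)/π)∫_{Δ_k^n}|φ_x|) → 0` as `n → ∞`,
where `Δ_k^n = (πk/(n+1), π(k+1)/(n+1))`. -/
theorem statement8
    (Ψ q : ℝ → ℝ)
    (hΨ : IsNFunction Ψ)
    -- q = Ψ′ is the left derivative of Ψ
    (hq : ∀ s > (0 : ℝ), HasDerivWithinAt Ψ (q s) (Set.Iic s) s)
    -- Σ (k+1)^{-1/2} q(1/(k+1)) < ∞
    (hqsum : Summable (fun k : ℕ => (1 / Real.sqrt ((k : ℝ) + 1)) * q (1 / ((k : ℝ) + 1))))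
    -- f is 2π-periodic with ∫_0^π Ψ(|φ_x|) < ∞
    (f : ℝ → ℝ) (hper : Function.Periodic f (2 * π)) (x : ℝ)
    (hφΨint : IntervalIntegrable (fun t => Ψ |phi f x t|) volume 0 π)
    -- x is an L^Ψ-point of f
    (hLΨpoint : Filter.Tendsto (fun δ => (1 / δ) * ∫ t in (0 : ℝ)..δ, Ψ |phi f x t|)
      (nhdsWithin 0 (Set.Ioi 0)) (nhds 0)) :
    Filter.Tendsto
      (fun n : ℕ =>
        ∑ k ∈ Finset.range (n + 1),
          Ψ (1 / ((k : ℝ) + 1)) *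
            Ψ ((((n : ℝ) + 1) / π) *
              ∫ t in (π * (k : ℝ) / ((n : ℝ) + 1))..(π * ((k : ℝ) + 1) / ((n : ℝ) + 1)),
                |phi f x t|))
      Filter.atTop (nhds 0) :=
  statement8_general Ψ q hΨ hq hqsum f x hφΨint hLΨpoint
end
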